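/- arXiv:1003.3959 — 3 statements merged into one kernel-verified Lean document; each statement's English description precedes it below -/
import Mathlib

section
/- Let G and H be locally compact, compactly generated Hausdorff topological groups, with compact generating subsets S and T respectively. Suppose that G equipped with the word metric with respect to S is quasi-isometric to H equipped with the word metric with respect to T. Then G is compactly presented if and only if H is compactly presented. -/
open scoped Pointwise

/-- A group `G` is *boundedly presented* by a subset `S ⊆ G` if there are an integer `n` and a
set `R` of words of length at most `n` in the letters `S ∪ S⁻¹`, each representing the identity
in `G`, such that the canonical homomorphism from the quotient of the free group on `S` by the
normal closure of `R` onto `G` is an isomorphism. -/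
def BoundedlyPresentedBy (G : Type*) [Group G] (S : Set G) : Prop :=
  ∃ (n : ℕ) (R : Set (FreeGroup S)),
    (∀ r ∈ R, ∃ w : List (S × Bool), FreeGroup.mk w = r ∧ w.length ≤ n) ∧
    Function.Surjective (FreeGroup.lift (fun s : S => (s : G))) ∧
    MonoidHom.ker (FreeGroup.lift (fun s : S => (s : G))) = Subgroup.normalClosure R

/-- A topological group is *compactly presented* if it is boundedly presented by some compact
subset. -/
def CompactlyPresented (G : Type*) [Group G] [TopologicalSpace G] : Prop :=
  ∃ S : Set G, IsCompact S ∧ BoundedlyPresentedBy G S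

/-- The word metric on a group `G` with respect to a generating subset `S`:
`d(g, h) = min {n | g⁻¹ * h ∈ (S ∪ S⁻¹) ^ n}`. -/
noncomputable def wordDist {G : Type*} [Group G] (S : Set G) (g h : G) : ℝ :=
  (sInf {n : ℕ | g⁻¹ * h ∈ (S ∪ S⁻¹) ^ n} : ℕ)

/-- `f` is a quasi-isometry from `(X, dX)` to `(Y, dY)`: it is a quasi-isometric embedding with
quasi-dense image. -/
def IsQuasiIsometryWith {X Y : Type*} (dX : X → X → ℝ) (dY : Y → Y → ℝ) (f : X → Y) : Prop :=
  ∃ A B : ℝ, 1 ≤ A ∧ 0 ≤ B ∧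
    (∀ x x' : X, A⁻¹ * dX x x' - B ≤ dY (f x) (f x')) ∧
    (∀ x x' : X, dY (f x) (f x') ≤ A * dX x x' + B) ∧
    (∀ y : Y, ∃ x : X, dY (f x) y ≤ B)

/-!
A bounded presentation over `S` says that every word in the kernel of `FreeGroup S →* G` is a
product of conjugates of trivial words of length `≤ n`. Suppose `H` is boundedly presented over
`T`, and `φ : G → H`, `ψ : H → G` are coarsely Lipschitz with `ψ ∘ φ` close to the identity.
Replacing each step `z ⟶ z * t` of a `T`-path by a short `S`-word from `ψ z` to `ψ (z * t)` is a
homomorphism `FreeGroup T →* (H → FreeGroup S) ⋊ H`. It sends short relators to short relators,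
so modulo the short relators of `S` the pulled-back path depends only on its endpoint. Following
the pullback of a path to `φ x` by a short word from `ψ (φ x)` to `x` then defines
`κ : G → FreeGroup S ⧸ ⟨⟨short relators⟩⟩` with `κ x * s = κ (x * s)`, and this forces every
trivial `S`-word to vanish in the quotient.

A quasi-isometry and a quasi-inverse give such pairs `(φ, ψ)` in both directions. Passing from an
arbitrary compact presentation to the given generating sets is the case `φ = ψ = id`; it needs
compact sets to have bounded word length, which follows from the Baire category theorem.
-/

section WordMetric

variable {G : Type*} [Group G] {S : Set G}

abbrev evalWord (S : Set G) : FreeGroup S →* G := FreeGroup.lift (↑)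

theorem evalWord_surjective_iff : Function.Surjective (evalWord S) ↔ Subgroup.closure S = ⊤ := by
  rw [← MonoidHom.range_eq_top, FreeGroup.range_lift_eq_closure, Subtype.range_coe]

theorem evalWord_mem_pow [DecidableEq G] (w : FreeGroup S) :
    evalWord S w ∈ (S ∪ S⁻¹) ^ w.norm := by
  suffices h : ∀ L : List (S × Bool), evalWord S (FreeGroup.mk L) ∈ (S ∪ S⁻¹) ^ L.length by
    simpa only [FreeGroup.mk_toWord, FreeGroup.norm] using h w.toWord
  intro L
  induction L with
  | nil => simp
  | cons a L ih =>
    rw [FreeGroup.lift_mk] at ih ⊢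
    rw [List.map_cons, List.prod_cons, List.length_cons, pow_succ']
    refine Set.mul_mem_mul ?_ ih
    rcases a with ⟨s, _ | _⟩
    · exact Or.inr (by simp)
    · exact Or.inl s.2

theorem exists_norm_le_of_mem_pow [DecidableEq G] {n : ℕ} {x : G}
    (hx : x ∈ (S ∪ S⁻¹ ∪ {1}) ^ n) :
    ∃ w : FreeGroup S, w.norm ≤ n ∧ evalWord S w = x := by
  induction n generalizing x with
  | zero => exact ⟨1, by simp, by simpa using hx.symm⟩
  | succ n ih =>
    rw [pow_succ] at hx
    obtain ⟨y, hy, s, hs, rfl⟩ := hx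
    obtain ⟨w, hw, rfl⟩ := ih hy
    obtain ⟨v, hv, rfl⟩ : ∃ v : FreeGroup S, v.norm ≤ 1 ∧ evalWord S v = s := by
      rcases hs with (hs | hs) | rfl
      · exact ⟨.of ⟨s, hs⟩, by simp, by simp⟩
      · exact ⟨(.of ⟨s⁻¹, hs⟩)⁻¹, by simp, by simp⟩
      · exact ⟨1, by simp, by simp⟩
    exact ⟨w * v, (FreeGroup.norm_mul_le w v).trans (by omega), map_mul _ _ _⟩

theorem wordDist_le_norm [DecidableEq G] {x y : G} {w : FreeGroup S}
    (hw : evalWord S w = x⁻¹ * y) : wordDist S x y ≤ w.norm :=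
  Nat.cast_le.2 (Nat.sInf_le (show x⁻¹ * y ∈ (S ∪ S⁻¹) ^ w.norm from hw ▸ evalWord_mem_pow w))

theorem exists_norm_le_wordDist [DecidableEq G] (hS : Subgroup.closure S = ⊤) (x y : G) :
    ∃ w : FreeGroup S, (w.norm : ℝ) ≤ wordDist S x y ∧ evalWord S w = x⁻¹ * y := by
  obtain ⟨w, hw⟩ := evalWord_surjective_iff.2 hS (x⁻¹ * y)
  have hmem := Nat.sInf_mem (s := {n : ℕ | x⁻¹ * y ∈ (S ∪ S⁻¹) ^ n})
    ⟨w.norm, hw ▸ evalWord_mem_pow w⟩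
  obtain ⟨v, hv, hv'⟩ :=
    exists_norm_le_of_mem_pow (Set.pow_subset_pow_left Set.subset_union_left hmem)
  exact ⟨v, Nat.cast_le.2 hv, hv'⟩

theorem wordDist_self (S : Set G) (x : G) : wordDist S x x = 0 := by
  simp [wordDist]

theorem wordDist_mul_le_one {s : G} (hs : s ∈ S) (x : G) : wordDist S x (x * s) ≤ 1 := by
  classical
  simpa using wordDist_le_norm (w := .of ⟨s, hs⟩) (x := x) (by simp)

theorem wordDist_comm (hS : Subgroup.closure S = ⊤) (x y : G) :
    wordDist S x y = wordDist S y x := by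
  classical
  have key : ∀ a b : G, wordDist S a b ≤ wordDist S b a := fun a b => by
    obtain ⟨w, hw, hw'⟩ := exists_norm_le_wordDist hS b a
    calc wordDist S a b ≤ (w⁻¹).norm := wordDist_le_norm (by simp [hw'])
      _ ≤ wordDist S b a := by rwa [FreeGroup.norm_inv_eq]
  exact le_antisymm (key x y) (key y x)

theorem wordDist_triangle (hS : Subgroup.closure S = ⊤) (x y z : G) :
    wordDist S x z ≤ wordDist S x y + wordDist S y z := by
  classical
  obtain ⟨u, hu, hu'⟩ := exists_norm_le_wordDist hS x y
  obtain ⟨v, hv, hv'⟩ := exists_norm_le_wordDist hS y z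
  calc wordDist S x z ≤ (u * v).norm := wordDist_le_norm (by simp [hu', hv', mul_assoc])
    _ ≤ (u.norm : ℝ) + v.norm := by exact_mod_cast FreeGroup.norm_mul_le u v
    _ ≤ _ := add_le_add hu hv

end WordMetric

section Presentation

variable {G : Type*} [Group G] {S : Set G}

def shortRelators [DecidableEq G] (S : Set G) (n : ℕ) : Set (FreeGroup S) :=
  {r | r.norm ≤ n ∧ evalWord S r = 1}

theorem normalClosure_shortRelators_le_ker [DecidableEq G] (S : Set G) (n : ℕ) :
    Subgroup.normalClosure (shortRelators S n) ≤ (evalWord S).ker :=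
  Subgroup.normalClosure_le_normal fun _ hr => hr.2

theorem boundedlyPresentedBy_iff [DecidableEq G] :
    BoundedlyPresentedBy G S ↔ Subgroup.closure S = ⊤ ∧
      ∃ n, (evalWord S).ker = Subgroup.normalClosure (shortRelators S n) := by
  constructor
  · rintro ⟨n, R, hR, hsurj, hker⟩
    refine ⟨evalWord_surjective_iff.1 hsurj, n,
      le_antisymm ?_ (normalClosure_shortRelators_le_ker S n)⟩
    rw [hker]
    refine Subgroup.normalClosure_mono fun r hr => ⟨?_, ?_⟩
    · obtain ⟨w, rfl, hw⟩ := hR r hr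
      exact FreeGroup.norm_mk_le.trans hw
    · exact (show r ∈ (evalWord S).ker from hker ▸ Subgroup.subset_normalClosure hr)
  · rintro ⟨hS, n, hker⟩
    exact ⟨n, shortRelators S n, fun r hr => ⟨r.toWord, FreeGroup.mk_toWord, hr.1⟩,
      evalWord_surjective_iff.2 hS, hker⟩

theorem mk_eq_mk_of_evalWord_eq [DecidableEq G] {N : ℕ} {a b : FreeGroup S}
    (hab : evalWord S a = evalWord S b) (hN : a.norm + b.norm ≤ N) :
    (a : FreeGroup S ⧸ Subgroup.normalClosure (shortRelators S N)) = b := by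
  refine QuotientGroup.eq.2 (Subgroup.subset_normalClosure ⟨?_, by simp [hab]⟩)
  exact (FreeGroup.norm_mul_le _ _).trans (by rwa [FreeGroup.norm_inv_eq])

theorem ker_evalWord_le_of_equivariant {Γ : Type*} [Group Γ] (π : FreeGroup S →* Γ) (κ : G → Γ)
    (hκ : ∀ x (s : S), κ x * π (.of s) = κ (x * s)) : (evalWord S).ker ≤ π.ker := by
  have key : ∀ w x, κ x * π w = κ (x * evalWord S w) := by
    intro w
    induction w with
    | C1 => simp
    | of s => intro x; simpa using hκ x s
    | inv_of s _ =>
      intro x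
      rw [map_inv, mul_inv_eq_iff_eq_mul, hκ]
      simp
    | mul u v hu hv => intro x; rw [map_mul, ← mul_assoc, hu, hv, map_mul, mul_assoc]
  intro w hw
  simpa [(MonoidHom.mem_ker).1 hw] using key w 1

end Presentation

section Pullback

variable {H M : Type*} [Group H] [Group M] {T : Set H}

def rightShift : H →* MulAut (H → M) where
  toFun h :=
    { toFun := fun F z => F (z * h)
      invFun := fun F z => F (z * h⁻¹)
      left_inv := fun F => by simp
      right_inv := fun F => by simp
      map_mul' := fun _ _ => rfl }
  map_one' := by ext; simp
  map_mul' _ _ := by ext; simp [mul_assoc]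

@[simp] theorem rightShift_apply (h : H) (F : H → M) (z : H) : rightShift h F z = F (z * h) :=
  rfl

@[simp] theorem rightShift_symm_apply (h : H) (F : H → M) (z : H) :
    (rightShift h).symm F z = F (z * h⁻¹) :=
  rfl

/-- `(pullback T c x).left z` replaces each step `w ⟶ w * t` of the path `x` started at `z` by
`c w (w * t)`; the `H`-component is `evalWord T x`. -/
def pullback (T : Set H) (c : H → H → M) : FreeGroup T →* (H → M) ⋊[rightShift] H :=
  FreeGroup.lift fun t => ⟨fun z => c z (z * t), t⟩

variable {c : H → H → M}

@[simp] theorem pullback_right (x : FreeGroup T) : (pullback T c x).right = evalWord T x := by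
  rw [← SemidirectProduct.rightHom_eq_right, ← MonoidHom.comp_apply]
  exact DFunLike.congr_fun (FreeGroup.ext_hom _ _ fun _ => by simp [pullback]) x

theorem pullback_left_mul (x y : FreeGroup T) (z : H) :
    (pullback T c (x * y)).left z =
      (pullback T c x).left z * (pullback T c y).left (z * evalWord T x) := by
  simp [SemidirectProduct.mul_left]

theorem map_pullback_left_of_coboundary {M' : Type*} [Group M'] (f : M →* M') (ψ : H → M')
    (hc : ∀ z z', f (c z z') = (ψ z)⁻¹ * ψ z') (x : FreeGroup T) (z : H) :
    f ((pullback T c x).left z) = (ψ z)⁻¹ * ψ (z * evalWord T x) := by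
  induction x generalizing z with
  | C1 => simp
  | of t => simp [pullback, hc]
  | inv_of t ih => simp [ih]
  | mul x y hx hy => simp [hx, hy, mul_assoc]

theorem norm_pullback_left_le [DecidableEq H] {α : Type*} [DecidableEq α]
    {c : H → H → FreeGroup α} {K : ℕ} (hc : ∀ z (t : T), (c z (z * t)).norm ≤ K)
    (x : FreeGroup T) (z : H) :
    ((pullback T c x).left z).norm ≤ K * x.norm := by
  suffices h : ∀ (L : List (T × Bool)) z,
      ((pullback T c (FreeGroup.mk L)).left z).norm ≤ K * L.length by
    have := h x.toWord z
    rwa [FreeGroup.mk_toWord] at this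
  intro L
  induction L with
  | nil => simp [← FreeGroup.one_eq_mk]
  | cons a L ih =>
    intro z
    have hletter : ((pullback T c (FreeGroup.mk [a])).left z).norm ≤ K := by
      rcases a with ⟨t, _ | _⟩
      · have hinv : FreeGroup.mk [(t, false)] = (FreeGroup.of t)⁻¹ := by
          rw [FreeGroup.of, FreeGroup.inv_mk]; rfl
        simpa [hinv, pullback] using hc (z * (t : H)⁻¹) t
      · change ((pullback T c (FreeGroup.of t)).left z).norm ≤ K
        simpa [pullback] using hc z t
    rw [← List.singleton_append, ← FreeGroup.mul_mk, pullback_left_mul, List.length_append]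
    calc _ ≤ _ := FreeGroup.norm_mul_le _ _
      _ ≤ K + K * L.length := add_le_add hletter (ih _)
      _ = _ := by simp; ring

theorem mk_pullback_left_eq_of_evalWord_eq {N : Subgroup M} [N.Normal] {R : Set (FreeGroup T)}
    (hker : (evalWord T).ker = Subgroup.normalClosure R)
    (hR : ∀ r ∈ R, ∀ z, (pullback T c r).left z ∈ N) {x y : FreeGroup T}
    (hxy : evalWord T x = evalWord T y) (z : H) :
    ((pullback T c x).left z : M ⧸ N) = (pullback T c y).left z := by
  let P := (SemidirectProduct.map (φ₂ := rightShift) (MonoidHom.compLeft (QuotientGroup.mk' N) H)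
    (MonoidHom.id H) fun _ => rfl).comp (pullback T c)
  have hRP : Subgroup.normalClosure R ≤ P.ker := Subgroup.normalClosure_le_normal fun r hr => by
    refine SemidirectProduct.ext (funext fun z => (QuotientGroup.eq_one_iff _).2 (hR r hr z)) ?_
    change (pullback T c r).right = 1
    simpa using hker.ge (Subgroup.subset_normalClosure hr)
  have hPxy : P x = P y := P.eq_iff.2 (hRP (hker ▸ (evalWord T).eq_iff.1 hxy))
  exact congrFun (congrArg SemidirectProduct.left hPxy) z

end Pullback

section Transfer

variable {G H : Type*} [Group G] [Group H] {S : Set G} {T : Set H}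

theorem mk_pullback_left_eq_of_ker_eq [DecidableEq G] [DecidableEq H] {n K N : ℕ}
    (hker : (evalWord T).ker = Subgroup.normalClosure (shortRelators T n)) (hN : K * n ≤ N)
    {ψ : H → G} {c : H → H → FreeGroup S} (hc_eval : ∀ z z', evalWord S (c z z') = (ψ z)⁻¹ * ψ z')
    (hc_norm : ∀ z (t : T), (c z (z * t)).norm ≤ K) {x y : FreeGroup T}
    (hxy : evalWord T x = evalWord T y) (z : H) :
    ((pullback T c x).left z : FreeGroup S ⧸ Subgroup.normalClosure (shortRelators S N)) =
      (pullback T c y).left z := by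
  refine mk_pullback_left_eq_of_evalWord_eq hker (fun r hr z => ?_) hxy z
  refine Subgroup.subset_normalClosure ⟨(norm_pullback_left_le hc_norm r z).trans ?_, ?_⟩
  · exact (Nat.mul_le_mul_left K hr.1).trans hN
  · rw [map_pullback_left_of_coboundary _ ψ hc_eval, hr.2, mul_one, inv_mul_cancel]

theorem BoundedlyPresentedBy.of_coarseRetraction (hT : BoundedlyPresentedBy H T)
    (hS : Subgroup.closure S = ⊤) (φ : G → H) (ψ : H → G) (C : ℝ)
    (hφ : ∀ x, ∀ s ∈ S, wordDist T (φ x) (φ (x * s)) ≤ C)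
    (hψ : ∀ z, ∀ t ∈ T, wordDist S (ψ z) (ψ (z * t)) ≤ C)
    (hψφ : ∀ x, wordDist S (ψ (φ x)) x ≤ C) :
    BoundedlyPresentedBy G S := by
  classical
  obtain ⟨hTgen, n, hTker⟩ := boundedlyPresentedBy_iff.1 hT
  set K := ⌈C⌉₊
  set N := K * n + K * K + 2 * K + 1
  set R := Subgroup.normalClosure (shortRelators S N)
  refine boundedlyPresentedBy_iff.2 ⟨hS, N, le_antisymm ?_ (normalClosure_shortRelators_le_ker S N)⟩
  have le_K : ∀ {m : ℕ} {d : ℝ}, (m : ℝ) ≤ d → d ≤ C → m ≤ K := fun h h' =>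
    Nat.cast_le.1 ((h.trans h').trans (Nat.le_ceil C))
  choose p hp_norm hp_eval using exists_norm_le_wordDist hS
  set c : H → H → FreeGroup S := fun z z' => p (ψ z) (ψ z')
  have hc_eval (z z' : H) : evalWord S (c z z') = (ψ z)⁻¹ * ψ z' := hp_eval _ _
  have hc_norm (z : H) (t : T) : (c z (z * t)).norm ≤ K := le_K (hp_norm _ _) (hψ z t t.2)
  choose v hv using fun x => evalWord_surjective_iff.2 hTgen (φ x)
  let κ (x : G) : FreeGroup S ⧸ R := (pullback T c (v x)).left 1 * p (ψ (φ x)) x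
  refine (ker_evalWord_le_of_equivariant (QuotientGroup.mk' R) κ fun x s => ?_).trans
    (QuotientGroup.ker_mk' R).le
  obtain ⟨u, hu_norm, hu_eval⟩ := exists_norm_le_wordDist hTgen (φ x) (φ (x * s))
  have hpath := mk_pullback_left_eq_of_ker_eq (N := N) hTker (by omega) hc_eval hc_norm
    (x := v x * u) (y := v (x * s)) (by simp [hv, hu_eval]) 1
  rw [pullback_left_mul, one_mul, hv, QuotientGroup.mk_mul] at hpath
  have hE : ((pullback T c u).left (φ x)).norm ≤ K * K :=
    (norm_pullback_left_le hc_norm u (φ x)).trans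
      (Nat.mul_le_mul_left K (le_K hu_norm (hφ x s s.2)))
  have hrel : ((pullback T c u).left (φ x) * p (ψ (φ (x * s))) (x * s) : FreeGroup S ⧸ R) =
      p (ψ (φ x)) x * FreeGroup.of s := by
    refine mk_eq_mk_of_evalWord_eq ?_ ?_
    · simp [map_pullback_left_of_coboundary _ ψ hc_eval, hp_eval, hu_eval, mul_assoc]
    · beta_reduce
      have h₁ := FreeGroup.norm_mul_le ((pullback T c u).left (φ x)) (p (ψ (φ (x * s))) (x * s))
      have h₂ := FreeGroup.norm_mul_le (p (ψ (φ x)) x) (.of s)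
      have := le_K (hp_norm _ _) (hψφ x)
      have := le_K (hp_norm _ _) (hψφ (x * s))
      rw [FreeGroup.norm_of] at h₂
      omega
  simp only [κ, QuotientGroup.mk'_apply]
  rw [← hpath, mul_assoc, mul_assoc, hrel]

end Transfer

section QuasiIsometry

variable {X Y : Type*} {dX : X → X → ℝ} {dY : Y → Y → ℝ} {f : X → Y}

theorem IsQuasiIsometryWith.exists_coarseInverse (hf : IsQuasiIsometryWith dX dY f)
    (hsymm : ∀ y y', dY y y' = dY y' y) (htri : ∀ y y' y'', dY y y'' ≤ dY y y' + dY y' y'') :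
    ∃ (g : Y → X) (C : ℝ), (∀ x x', dX x x' ≤ 1 → dY (f x) (f x') ≤ C) ∧
      (∀ y y', dY y y' ≤ 1 → dX (g y) (g y') ≤ C) ∧
      (∀ x, dX (g (f x)) x ≤ C) ∧ (∀ y, dY (f (g y)) y ≤ C) := by
  obtain ⟨A, B, hA, hB, hlower, hupper, hdense⟩ := hf
  choose g hg using hdense
  have hA₀ : 0 < A := zero_lt_one.trans_le hA
  have hcontrol : ∀ {x x'} {E : ℝ}, dY (f x) (f x') ≤ E → dX x x' ≤ A * (E + B) :=
    fun {x x'} _ h => (inv_mul_le_iff₀ hA₀).1 (by linarith [hlower x x'])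
  refine ⟨g, A * (3 * B + 1) + B, fun x x' h => ?_, fun y y' h => ?_, fun x => ?_, fun y => ?_⟩
  · nlinarith [hupper x x']
  · have : dY (f (g y)) (f (g y')) ≤ 2 * B + 1 := by
      linarith [htri (f (g y)) y (f (g y')), htri y y' (f (g y')), hg y, hg y', hsymm y' (f (g y'))]
    nlinarith [hcontrol this]
  · nlinarith [hcontrol (hg (f x))]
  · nlinarith [hg y]

end QuasiIsometry

section Compact

variable {G : Type*} [Group G] [TopologicalSpace G] [IsTopologicalGroup G] [T2Space G]
  [LocallyCompactSpace G] {S : Set G}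

theorem exists_subset_pow_of_isCompact (hS : IsCompact S) (hgen : Subgroup.closure S = ⊤)
    {K : Set G} (hK : IsCompact K) : ∃ n, K ⊆ (S ∪ S⁻¹ ∪ {1}) ^ n := by
  classical
  set Q := S ∪ S⁻¹ ∪ {1}
  have hQ₁ : (1 : G) ∈ Q := Or.inr rfl
  have hQinv : Q⁻¹ = Q := by
    simp only [Q, Set.union_inv, inv_inv, Set.inv_singleton, inv_one, Set.union_comm S⁻¹ S]
  have hQcompact : ∀ n, IsCompact (Q ^ n) := fun n => by
    induction n with
    | zero => simp
    | succ n ih => rw [pow_succ]; exact ih.mul ((hS.union hS.inv).union isCompact_singleton)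
  have hcover : ⋃ n, Q ^ n = Set.univ := Set.eq_univ_of_forall fun x => by
    obtain ⟨w, rfl⟩ := evalWord_surjective_iff.2 hgen x
    exact Set.mem_iUnion.2 ⟨_, Set.pow_subset_pow_left Set.subset_union_left (evalWord_mem_pow w)⟩
  obtain ⟨m, x₀, hx₀⟩ := nonempty_interior_of_iUnion_of_closed (fun n => (hQcompact n).isClosed)
    hcover
  have hinterior : ∀ n, Q ^ n ⊆ interior (Q ^ (n + m + m)) := fun n y hy => by
    refine mem_interior.2 ⟨(y * x₀⁻¹) • interior (Q ^ m), ?_, isOpen_interior.smul _, ?_⟩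
    · rintro _ ⟨w, hw, rfl⟩
      have hx₀inv : x₀⁻¹ ∈ Q ^ m := by
        rw [← hQinv, inv_pow]; exact Set.inv_mem_inv.2 (interior_subset hx₀)
      rw [pow_add, pow_add]
      exact Set.mul_mem_mul (Set.mul_mem_mul hy hx₀inv) (interior_subset hw)
    · simpa using Set.smul_mem_smul_set (a := y * x₀⁻¹) hx₀
  obtain ⟨n, hn⟩ := hK.elim_directed_cover (fun n => interior (Q ^ n)) (fun _ => isOpen_interior)
    (fun x _ => Set.mem_iUnion.2 (by
      obtain ⟨n, hn⟩ := Set.mem_iUnion.1 (hcover ▸ Set.mem_univ x)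
      exact ⟨_, hinterior n hn⟩))
    (Monotone.directed_le fun _ _ h => interior_mono (Set.pow_subset_pow_right hQ₁ h))
  exact ⟨n, hn.trans interior_subset⟩

theorem exists_wordDist_mul_le_of_isCompact (hS : IsCompact S) (hgen : Subgroup.closure S = ⊤)
    {K : Set G} (hK : IsCompact K) : ∃ n : ℕ, ∀ x, ∀ k ∈ K, wordDist S x (x * k) ≤ n := by
  classical
  obtain ⟨n, hn⟩ := exists_subset_pow_of_isCompact hS hgen hK
  refine ⟨n, fun x k hk => ?_⟩
  obtain ⟨w, hw, hwk⟩ := exists_norm_le_of_mem_pow (hn hk)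
  exact (wordDist_le_norm (by rw [hwk, inv_mul_cancel_left])).trans (Nat.cast_le.2 hw)

theorem BoundedlyPresentedBy.of_isCompact {S' : Set G} (h : BoundedlyPresentedBy G S')
    (hS : IsCompact S) (hgen : Subgroup.closure S = ⊤) (hS' : IsCompact S') :
    BoundedlyPresentedBy G S := by
  classical
  have hgen' := (boundedlyPresentedBy_iff.1 h).1
  obtain ⟨n, hn⟩ := exists_wordDist_mul_le_of_isCompact hS' hgen' hS
  obtain ⟨n', hn'⟩ := exists_wordDist_mul_le_of_isCompact hS hgen hS'
  exact h.of_coarseRetraction hgen id id (max n n' : ℕ)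
    (fun x s hs => (hn x s hs).trans (Nat.cast_le.2 (le_max_left _ _)))
    (fun x s hs => (hn' x s hs).trans (Nat.cast_le.2 (le_max_right _ _)))
    (fun x => by simp [wordDist_self])

theorem compactlyPresented_iff_boundedlyPresentedBy (hS : IsCompact S)
    (hgen : Subgroup.closure S = ⊤) : CompactlyPresented G ↔ BoundedlyPresentedBy G S :=
  ⟨fun ⟨_, hS', h⟩ => h.of_isCompact hS hgen hS', fun h => ⟨S, hS, h⟩⟩

end Compact

/-- among locally compact compactly generated Hausdorff topological groups, being
compactly presented is a quasi-isometry invariant (for the word metrics of compact generating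
subsets). -/
theorem compactlyPresented_iff_of_quasiIsometry {G H : Type*}
    [Group G] [TopologicalSpace G] [IsTopologicalGroup G] [T2Space G] [LocallyCompactSpace G]
    [Group H] [TopologicalSpace H] [IsTopologicalGroup H] [T2Space H] [LocallyCompactSpace H]
    (S : Set G) (hS : IsCompact S) (hSgen : Subgroup.closure S = ⊤)
    (T : Set H) (hT : IsCompact T) (hTgen : Subgroup.closure T = ⊤)
    (f : G → H) (hf : IsQuasiIsometryWith (wordDist S) (wordDist T) f) :
    CompactlyPresented G ↔ CompactlyPresented H := by
  rw [compactlyPresented_iff_boundedlyPresentedBy hS hSgen,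
    compactlyPresented_iff_boundedlyPresentedBy hT hTgen]
  obtain ⟨g, C, hfC, hgC, hgf, hfg⟩ :=
    hf.exists_coarseInverse (wordDist_comm hTgen) (wordDist_triangle hTgen)
  exact ⟨fun hG => hG.of_coarseRetraction hTgen g f C
      (fun y t ht => hgC _ _ (wordDist_mul_le_one ht y))
      (fun x s hs => hfC _ _ (wordDist_mul_le_one hs x)) hfg,
    fun hH => hH.of_coarseRetraction hSgen f g C
      (fun x s hs => hfC _ _ (wordDist_mul_le_one hs x))
      (fun y t ht => hgC _ _ (wordDist_mul_le_one ht y)) hgf⟩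
end

section
/- Let X be a weakly geodesic metric space. If X is simply connected (as a topological space), then X is coarsely simply connected. -/
/-- An `r`-path for the distance function `d`: a nonempty finite sequence of points in which any
two consecutive points are at distance at most `r`. -/
def IsPathOf {X : Type*} (d : X → X → ℝ) (r : ℝ) (p : List X) : Prop :=
  p ≠ [] ∧ p.Chain' (fun a b => d a b ≤ r)

/-- One elementary step of `r`-equivalence: insertion of one point strictly between two
consecutive points of the sequence, both sequences being `r`-paths. -/
def PathInsertStep {X : Type*} (d : X → X → ℝ) (r : ℝ) (p q : List X) : Prop :=
  IsPathOf d r p ∧ IsPathOf d r q ∧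
    ∃ (l₁ l₂ : List X) (y : X), l₁ ≠ [] ∧ l₂ ≠ [] ∧ p = l₁ ++ l₂ ∧ q = l₁ ++ y :: l₂

/-- `r`-equivalence of `r`-paths: the equivalence relation generated by insertion of one
point. -/
def PathEquiv {X : Type*} (d : X → X → ℝ) (r : ℝ) : List X → List X → Prop :=
  Relation.EqvGen (PathInsertStep d r)

/-- `p` is an `r`-loop based at `x`. -/
def IsLoopOf {X : Type*} (d : X → X → ℝ) (r : ℝ) (x : X) (p : List X) : Prop :=
  IsPathOf d r p ∧ p.head? = some x ∧ p.getLast? = some x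

/-- Coarse connectedness with respect to the distance function `d`: for some `r`, any two points
are joined by an `r`-path. -/
def CoarselyConnectedWith {X : Type*} (d : X → X → ℝ) : Prop :=
  ∃ r : ℝ, ∀ x y : X, ∃ p : List X,
    IsPathOf d r p ∧ p.head? = some x ∧ p.getLast? = some y

/-- Coarse simple connectedness with respect to the distance function `d`: coarse connectedness,
and for every `r` there exists `r' ≥ r` such that every `r`-loop is `r'`-equivalent to the
constant loop at its basepoint. -/
def CoarselySimplyConnectedWith {X : Type*} (d : X → X → ℝ) : Prop :=
  CoarselyConnectedWith d ∧
    ∀ r : ℝ, ∃ r' : ℝ, r ≤ r' ∧ ∀ (x : X) (p : List X), IsLoopOf d r x p →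
      ∃ k : ℕ, PathEquiv d r' p (List.replicate (k + 1) x)

/-- A pseudometric space is coarsely simply connected if it is so with respect to its
distance. -/
def CoarselySimplyConnected (X : Type*) [PseudoMetricSpace X] : Prop :=
  CoarselySimplyConnectedWith (dist : X → X → ℝ)

/-!
Join consecutive points of an `r`-loop by paths of uniformly bounded diameter, which exist because
`X` is weakly geodesic, and concatenate them into a continuous loop `σ`. A fine sample of `σ` is
equivalent to the `r`-loop: the points inserted between two consecutive points of the loop lie on
one short path. As `X` is simply connected, `σ` is null-homotopic. Sampling the homotopy on a fine
grid, consecutive rows differ by small squares and are therefore equivalent, and the last row is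
constant.
-/

section PathEquiv

variable {X : Type*} {d : X → X → ℝ} {R : ℝ} {p q q' s t : List X}

lemma isPathOf_iff : IsPathOf d R p ↔ p ≠ [] ∧ p.IsChain (fun a b => d a b ≤ R) := Iff.rfl

lemma IsPathOf.append_append_congr (h : IsPathOf d R (s ++ q ++ t)) (hq : IsPathOf d R q)
    (hq' : IsPathOf d R q') (hhead : q.head? = q'.head?) (hlast : q.getLast? = q'.getLast?) :
    IsPathOf d R (s ++ q' ++ t) := by
  rw [isPathOf_iff] at *
  refine ⟨by simp [hq'.1], ?_⟩
  have hch := h.2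
  rw [List.isChain_append, List.isChain_append] at hch ⊢
  rw [List.getLast?_append_of_ne_nil _ hq.1] at hch
  rw [List.getLast?_append_of_ne_nil _ hq'.1, ← hhead, ← hlast]
  exact ⟨⟨hch.1.1, hq'.2, hch.1.2.2⟩, hch.2⟩

lemma IsPathOf.append_tail (hp : IsPathOf d R p) (hq : IsPathOf d R q) (h : p.getLast? = q.head?) :
    IsPathOf d R (p ++ q.tail) := by
  obtain ⟨b, q, rfl⟩ := List.exists_cons_of_ne_nil hq.1
  have hbq := List.isChain_cons.1 (isPathOf_iff.1 hq).2
  refine isPathOf_iff.2 ⟨by simp [hp.1], List.isChain_append.2 ⟨hp.2, hbq.2, ?_⟩⟩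
  rintro u hu v hv
  obtain rfl : b = u := by simpa [h] using hu
  exact hbq.1 v hv

lemma PathInsertStep.head?_eq (h : PathInsertStep d R p q) : p.head? = q.head? := by
  obtain ⟨-, -, l₁, l₂, y, h₁, -, rfl, rfl⟩ := h
  cases l₁ <;> simp_all

lemma PathInsertStep.getLast?_eq (h : PathInsertStep d R p q) : p.getLast? = q.getLast? := by
  obtain ⟨-, -, l₁, l₂, y, -, h₂, rfl, rfl⟩ := h
  cases l₂ <;> simp_all [List.getLast?_append]

lemma PathInsertStep.append_append (h : PathInsertStep d R q q')
    (hs : IsPathOf d R (s ++ q ++ t)) : PathInsertStep d R (s ++ q ++ t) (s ++ q' ++ t) := by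
  refine ⟨hs, hs.append_append_congr h.1 h.2.1 h.head?_eq h.getLast?_eq, ?_⟩
  obtain ⟨-, -, l₁, l₂, y, h₁, h₂, rfl, rfl⟩ := h
  exact ⟨s ++ l₁, l₂ ++ t, y, by simp [h₁], by simp [h₂], by simp, by simp⟩

lemma PathEquiv.isPathOf_append_append_iff (h : PathEquiv d R q q') :
    IsPathOf d R (s ++ q ++ t) ↔ IsPathOf d R (s ++ q' ++ t) := by
  induction h with
  | rel q q' h =>
    exact ⟨(·.append_append_congr h.1 h.2.1 h.head?_eq h.getLast?_eq),
      (·.append_append_congr h.2.1 h.1 h.head?_eq.symm h.getLast?_eq.symm)⟩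
  | refl => rfl
  | symm _ _ _ ih => exact ih.symm
  | trans _ _ _ _ _ ih₁ ih₂ => exact ih₁.trans ih₂

lemma PathEquiv.isPathOf_iff (h : PathEquiv d R p q) : IsPathOf d R p ↔ IsPathOf d R q := by
  simpa using h.isPathOf_append_append_iff (s := []) (t := [])

lemma PathEquiv.append_append (h : PathEquiv d R q q') (hs : IsPathOf d R (s ++ q ++ t)) :
    PathEquiv d R (s ++ q ++ t) (s ++ q' ++ t) := by
  induction h with
  | rel _ _ h => exact .rel _ _ (h.append_append hs)
  | refl => exact .refl _
  | symm _ _ h ih => exact .symm _ _ (ih ((PathEquiv.isPathOf_append_append_iff h).2 hs))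
  | trans _ _ _ h _ ih₁ ih₂ =>
    exact .trans _ _ _ (ih₁ hs) (ih₂ ((PathEquiv.isPathOf_append_append_iff h).1 hs))

lemma isPathOf_of_forall_mem (hne : p ≠ []) (h : ∀ u ∈ p, ∀ v ∈ p, d u v ≤ R) :
    IsPathOf d R p :=
  ⟨hne, (List.pairwise_of_forall_mem_list h).isChain⟩

lemma pathEquiv_pair_of_forall_mem : ∀ {p : List X} {a b : X},
    p.head? = some a → p.getLast? = some b → 2 ≤ p.length → (∀ u ∈ p, ∀ v ∈ p, d u v ≤ R) →
    PathEquiv d R p [a, b]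
  | [_, _], _, _, ha, hb, _, _ => by
    cases ha; cases hb; exact .refl _
  | a :: c :: e :: l, _, b, ha, hb, _, h => by
    cases ha
    have hsub : ∀ u ∈ c :: e :: l, u ∈ a :: c :: e :: l := fun u hu => .tail _ hu
    have hpath : IsPathOf d R ([a] ++ (c :: e :: l) ++ []) :=
      isPathOf_of_forall_mem (by simp) (by simpa using h)
    have hacb : ∀ u ∈ [a, c, b], ∀ v ∈ [a, c, b], d u v ≤ R := by
      have hmem : ∀ u ∈ [a, c, b], u ∈ a :: c :: e :: l := by
        have := List.mem_of_getLast? hb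
        simp_all
      exact fun u hu v hv => h u (hmem u hu) v (hmem v hv)
    have hinsert : PathInsertStep d R [a, b] [a, c, b] :=
      ⟨isPathOf_of_forall_mem (by simp) fun u hu v hv => hacb u (by aesop) v (by aesop),
        isPathOf_of_forall_mem (by simp) hacb, [a], [b], c, by simp, by simp, rfl, rfl⟩
    have := (pathEquiv_pair_of_forall_mem (p := c :: e :: l) rfl (by simpa using hb) (by simp)
      fun u hu v hv => h u (hsub u hu) v (hsub v hv)).append_append hpath
    simp only [List.append_nil, List.cons_append, List.nil_append] at this
    exact .trans _ _ _ this (.symm _ _ (.rel _ _ hinsert))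

end PathEquiv

section Ladder

variable {X : Type*} {d : X → X → ℝ} {R : ℝ}

lemma pathEquiv_swap_middle {u v v' w : X} (huv : d u v ≤ R) (hvw : d v w ≤ R)
    (huv' : d u v' ≤ R) (hv'v : d v' v ≤ R) (hv'w : d v' w ≤ R) :
    PathEquiv d R [u, v, w] [u, v', w] :=
  have hpath : IsPathOf d R [u, v', v, w] := by simp [isPathOf_iff, *]
  .trans _ _ _
    (.rel _ _ ⟨by simp [isPathOf_iff, *], hpath, [u], [v, w], v', by simp, by simp, rfl, rfl⟩)
    (.symm _ _
      (.rel _ _ ⟨by simp [isPathOf_iff, *], hpath, [u, v'], [w], v, by simp, by simp, rfl, rfl⟩))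

-- `(L.zip M).IsChain (CloseSquare d R)`: every square of the ladder with rails `L` and `M` has
-- all its sides and diagonals of length at most `R`.
def CloseSquare (d : X → X → ℝ) (R : ℝ) (p q : X × X) : Prop :=
  ∀ u ∈ [p.1, p.2, q.1, q.2], ∀ v ∈ [p.1, p.2, q.1, q.2], d u v ≤ R

lemma isPathOf_of_isChain_zip {L M : List X} (hne : L ≠ []) (hlen : L.length = M.length)
    (hsq : (L.zip M).IsChain (CloseSquare d R)) : IsPathOf d R L := by
  refine isPathOf_iff.2 ⟨hne, ?_⟩
  rw [← List.map_fst_zip hlen.le, List.isChain_map]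
  exact hsq.imp fun p q h => h p.1 (by simp) q.1 (by simp)

lemma pathEquiv_cons_cons_of_isChain_zip {a b b' : X} {T M : List X}
    (hlen : T.length = M.length) (hlast : (b :: T).getLast? = (b' :: M).getLast?)
    (hsq : ((a :: b :: T).zip (a :: b' :: M)).IsChain (CloseSquare d R)) :
    PathEquiv d R (a :: b :: T) (a :: b' :: M) := by
  -- Swap `b` for `b'` inside the first square, then move one rung down the ladder.
  induction T generalizing a b b' M with
  | nil =>
    obtain rfl : M = [] := List.eq_nil_of_length_eq_zero hlen.symm
    obtain rfl : b = b' := by simpa using hlast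
    exact .refl _
  | cons c T ih =>
    obtain ⟨c', M, rfl⟩ := List.exists_cons_of_length_eq_add_one hlen.symm
    simp only [List.zip_cons_cons, List.isChain_cons_cons] at hsq
    obtain ⟨hab, hbc, hsq⟩ := hsq
    have hL : IsPathOf d R ([] ++ [a, b, c] ++ T) :=
      isPathOf_of_isChain_zip (M := a :: b' :: c' :: M) (by simp) (by simpa using hlen)
        (List.isChain_cons_cons.2 ⟨hab, List.isChain_cons_cons.2 ⟨hbc, hsq⟩⟩)
    have hswap : PathEquiv d R (a :: b :: c :: T) (a :: b' :: c :: T) := by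
      simpa using (pathEquiv_swap_middle (hab a (by simp) b (by simp)) (hbc b (by simp) c (by simp))
        (hab a (by simp) b' (by simp)) (hab b' (by simp) b (by simp))
        (hbc b' (by simp) c (by simp))).append_append hL
    have htail : PathEquiv d R (b' :: c :: T) (b' :: c' :: M) :=
      ih (by simpa using hlen) (by simpa using hlast)
        (List.isChain_cons_cons.2 ⟨fun u hu v hv => hbc u (by aesop) v (by aesop), hsq⟩)
    have hpath : IsPathOf d R ([a] ++ (b' :: c :: T) ++ []) := by
      simpa using hswap.isPathOf_iff.1 (by simpa using hL)
    have hcons := htail.append_append hpath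
    simp only [List.cons_append, List.nil_append, List.append_nil] at hcons
    exact .trans _ _ _ hswap hcons

lemma pathEquiv_of_isChain_zip {L M : List X} (hlen : L.length = M.length)
    (hhead : L.head? = M.head?) (hlast : L.getLast? = M.getLast?)
    (hsq : (L.zip M).IsChain (CloseSquare d R)) : PathEquiv d R L M := by
  match L, M, hlen, hhead with
  | [], [], _, _ => exact .refl _
  | [_], [_], _, rfl => exact .refl _
  | a :: b :: T, _ :: b' :: M, hlen, hhead =>
    cases hhead
    exact pathEquiv_cons_cons_of_isChain_zip (by simpa using hlen) (by simpa using hlast) hsq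

end Ladder

open Filter

lemma List.isChain_map_range_succ {α : Type*} {r : α → α → Prop} {f : ℕ → α} {n : ℕ} :
    ((List.range (n + 1)).map f).IsChain r ↔ ∀ i < n, r (f i) (f (i + 1)) := by
  rw [List.isChain_map, List.isChain_range_succ]

lemma dist_natCast_div_succ (i n : ℕ) : dist ((i : ℝ) / n) ((i + 1 : ℕ) / n) = 1 / n := by
  rw [Real.dist_eq, ← sub_div, abs_div]
  simp

lemma dist_le_one_div_of_mem_pair {m n : ℕ} {a b : ℝ} (ha : a ∈ [(m : ℝ) / n, (m + 1 : ℕ) / n])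
    (hb : b ∈ [(m : ℝ) / n, (m + 1 : ℕ) / n]) : dist a b ≤ 1 / n := by
  simp only [List.mem_cons, List.not_mem_nil, or_false] at ha hb
  rcases ha with rfl | rfl <;> rcases hb with rfl | rfl <;>
    simp only [dist_self, dist_natCast_div_succ, dist_comm _ ((m : ℝ) / n), le_refl] <;>
    positivity

section Grid

variable {X : Type*} [PseudoMetricSpace X] {x y : X} {R : ℝ}

lemma eventually_pathEquiv_map_range_of_uniformContinuous {F : ℝ × ℝ → X}
    (hF : UniformContinuous F) (hR : 0 < R) (h0 : ∀ s, F (s, 0) = x) (h1 : ∀ s, F (s, 1) = y) :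
    ∀ᶠ n in atTop, ∀ k : ℕ, PathEquiv dist R ((List.range (n + 1)).map fun i : ℕ => F (0, i / n))
      ((List.range (n + 1)).map fun i : ℕ => F (k / n, i / n)) := by
  obtain ⟨δ, hδ, hFδ⟩ := Metric.uniformContinuous_iff.1 hF R hR
  filter_upwards [tendsto_one_div_atTop_nhds_zero_nat.eventually (gt_mem_nhds hδ),
    eventually_ne_atTop 0] with n hn hn0
  let row (k : ℕ) : List X := (List.range (n + 1)).map fun i : ℕ => F (k / n, i / n)
  have hstep (k : ℕ) : PathEquiv dist R (row k) (row (k + 1)) := by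
    refine pathEquiv_of_isChain_zip (by simp [row]) (by simp [row, List.head?_range, h0])
      (by simp [row, List.getLast?_range, hn0, h1]) ?_
    rw [List.zip_map', List.isChain_map_range_succ]
    intro i _
    have hsq : ∀ s ∈ [(k : ℝ) / n, (k + 1 : ℕ) / n], ∀ s' ∈ [(k : ℝ) / n, (k + 1 : ℕ) / n],
        ∀ t ∈ [(i : ℝ) / n, (i + 1 : ℕ) / n], ∀ t' ∈ [(i : ℝ) / n, (i + 1 : ℕ) / n],
        dist (F (s, t)) (F (s', t')) ≤ R := fun s hs s' hs' t ht t' ht' =>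
      (hFδ <| by
        rw [Prod.dist_eq]
        exact max_lt ((dist_le_one_div_of_mem_pair hs hs').trans_lt hn)
          ((dist_le_one_div_of_mem_pair ht ht').trans_lt hn)).le
    intro u hu v hv
    simp only [List.mem_cons, List.not_mem_nil, or_false] at hu hv
    rcases hu with rfl | rfl | rfl | rfl <;> rcases hv with rfl | rfl | rfl | rfl <;>
      exact hsq _ (by simp) _ (by simp) _ (by simp) _ (by simp)
  intro k
  induction k with
  | zero =>
    simp only [Nat.cast_zero, zero_div]
    exact .refl _
  | succ k ih => exact .trans _ _ _ ih (hstep k)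

end Grid

namespace Path

section Topological

variable {X : Type*} [TopologicalSpace X] {x y z : X}

noncomputable def sample (γ : Path x y) (n : ℕ) : List X :=
  (List.range (n + 1)).map fun i : ℕ => γ.extend (i / n)

lemma sample_head? (γ : Path x y) (n : ℕ) : (γ.sample n).head? = some x := by
  simp [sample, List.head?_range]

lemma sample_getLast? (γ : Path x y) {n : ℕ} (hn : n ≠ 0) : (γ.sample n).getLast? = some y := by
  simp [sample, List.getLast?_range, hn]

lemma sample_refl (x : X) (n : ℕ) : (Path.refl x).sample n = List.replicate (n + 1) x := by
  simp [sample]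

lemma sample_trans (γ : Path x y) (γ' : Path y z) (n : ℕ) :
    (γ.trans γ').sample (2 * n) = γ.sample n ++ (γ'.sample n).tail := by
  rcases eq_or_ne n 0 with rfl | hn
  · simp [sample]
  rw [sample, sample, sample, ← List.map_tail, List.tail_range, Nat.add_sub_cancel,
    List.range'_eq_map_range, show 2 * n + 1 = (n + 1) + n by ring, List.range_add,
    List.map_append, List.map_map, List.map_map]
  congr 1
  · refine List.map_congr_left fun i hi => ?_
    have hi : (i : ℝ) ≤ n := by exact_mod_cast Nat.lt_succ_iff.1 (List.mem_range.1 hi)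
    rw [Nat.cast_mul, Nat.cast_ofNat, extend_trans_of_le_half _ _ (by field_simp; linarith)]
    congr 1
    field_simp
  · refine List.map_congr_left fun i _ => ?_
    simp only [Function.comp, Nat.cast_mul, Nat.cast_ofNat, Nat.cast_add, Nat.cast_one]
    rw [extend_trans_of_half_le _ _ (by field_simp; linarith)]
    congr 1
    field_simp
    ring

end Topological

section Metric

variable {X : Type*} [PseudoMetricSpace X] {x y : X} {R : ℝ}

lemma eventually_isPathOf_sample (γ : Path x y) {ε : ℝ} (hε : 0 < ε) :
    ∀ᶠ n in atTop, IsPathOf dist ε (γ.sample n) := by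
  obtain ⟨δ, hδ, hγ⟩ := Metric.uniformContinuous_iff.1 γ.uniformContinuous_extend ε hε
  filter_upwards [tendsto_one_div_atTop_nhds_zero_nat.eventually (gt_mem_nhds hδ)] with n hn
  refine isPathOf_iff.2 ⟨by simp [sample], ?_⟩
  rw [sample, List.isChain_map_range_succ]
  exact fun i _ => (hγ (by rwa [dist_natCast_div_succ])).le

lemma pathEquiv_sample_of_forall_dist_le {γ : Path x y} (hγ : ∀ s t, dist (γ s) (γ t) ≤ R)
    {n : ℕ} (hn : n ≠ 0) : PathEquiv dist R (γ.sample n) [x, y] := by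
  refine pathEquiv_pair_of_forall_mem (γ.sample_head? n) (γ.sample_getLast? hn)
    (by simp only [sample, List.length_map, List.length_range]; omega) ?_
  have hmem : ∀ u ∈ γ.sample n, u ∈ Set.range γ := by
    simp only [sample, List.mem_map]
    rintro _ ⟨i, -, rfl⟩
    exact γ.extend_range.subset ⟨_, rfl⟩
  intro u hu v hv
  obtain ⟨s, rfl⟩ := hmem u hu
  obtain ⟨t, rfl⟩ := hmem v hv
  exact hγ s t

lemma Homotopy.eventually_pathEquiv_sample {γ γ' : Path x y} (H : γ.Homotopy γ') (hR : 0 < R) :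
    ∀ᶠ n in atTop, PathEquiv dist R (γ.sample n) (γ'.sample n) := by
  let F : ℝ × ℝ → X := fun p => H (Set.projIcc 0 1 zero_le_one p.1, Set.projIcc 0 1 zero_le_one p.2)
  have hF : UniformContinuous F :=
    (CompactSpace.uniformContinuous_of_continuous H.continuous).comp
      ((LipschitzWith.projIcc _).uniformContinuous.prodMap
        (LipschitzWith.projIcc _).uniformContinuous)
  have hF0 (s : ℝ) : F (s, 0) = x := by simp only [F, Set.projIcc_left]; exact H.source _
  have hF1 (s : ℝ) : F (s, 1) = y := by simp only [F, Set.projIcc_right]; exact H.target _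
  have hFγ (t : ℝ) : F (0, t) = γ.extend t := by
    simp only [F, Set.projIcc_left]; exact H.apply_zero _
  have hFγ' (t : ℝ) : F (1, t) = γ'.extend t := by
    simp only [F, Set.projIcc_right]; exact H.apply_one _
  filter_upwards [eventually_pathEquiv_map_range_of_uniformContinuous hF hR hF0 hF1,
    eventually_ne_atTop 0] with n h hn0
  convert h n using 1
  · simp [sample, hFγ]
  · simp [sample, hn0, hFγ']

noncomputable def through (J : ∀ a b : X, Path a b) : (a : X) → (l : List X) →
    Path a ((a :: l).getLast (List.cons_ne_nil a l))
  | a, [] => Path.refl a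
  | a, [b] => J a b
  | a, b :: c :: l => (J a b).trans (through J b (c :: l))

-- Dyadic rates, so that `sample_trans` splits the sample at each concatenation.
lemma eventually_pathEquiv_sample_through {J : ∀ a b : X, Path a b} {r R : ℝ}
    (hJ : ∀ a b, dist a b ≤ r → ∀ s t, dist (J a b s) (J a b t) ≤ R) :
    ∀ {a : X} {l : List X}, l ≠ [] → IsPathOf dist r (a :: l) →
      ∀ᶠ k in atTop, PathEquiv dist R ((through J a l).sample (2 ^ k)) (a :: l)
  | a, [b], _, hp => .of_forall fun k =>
    pathEquiv_sample_of_forall_dist_le (hJ a b (List.isChain_cons_cons.1 (isPathOf_iff.1 hp).2).1)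
      (pow_ne_zero k two_ne_zero)
  | a, b :: c :: l, _, hp => by
    have hab : dist a b ≤ r := (List.isChain_cons_cons.1 (isPathOf_iff.1 hp).2).1
    have hpR : IsPathOf dist R (a :: b :: c :: l) :=
      isPathOf_iff.2 ⟨hp.1, hp.2.imp fun u v huv => by simpa using hJ u v huv 0 1⟩
    obtain ⟨K, hK⟩ := eventually_atTop.1 <|
      eventually_pathEquiv_sample_through hJ (a := b) (l := c :: l) (by simp) ⟨by simp, hp.2.tail⟩
    refine eventually_atTop.2 ⟨K + 1, fun k hk => ?_⟩
    obtain ⟨k, rfl⟩ : ∃ j, k = j + 1 := ⟨k - 1, by omega⟩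
    set S₁ := (J a b).sample (2 ^ k)
    set S₂ := (through J b (c :: l)).sample (2 ^ k)
    have h₁ : PathEquiv dist R S₁ [a, b] :=
      pathEquiv_sample_of_forall_dist_le (hJ a b hab) (pow_ne_zero k two_ne_zero)
    have h₂ : PathEquiv dist R S₂ (b :: c :: l) := hK k (by omega)
    have hsplit : (through J a (b :: c :: l)).sample (2 ^ (k + 1)) = S₁ ++ S₂.tail := by
      rw [pow_succ']
      exact sample_trans _ _ _
    have hS₂ : S₂ = b :: S₂.tail := List.eq_cons_of_mem_head? (sample_head? _ _)
    have hchain := (isPathOf_iff.1 hpR).2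
    have hcat : IsPathOf dist R ([] ++ S₁ ++ S₂.tail) :=
      (h₁.isPathOf_iff.2 <| isPathOf_iff.2
          ⟨by simp, List.isChain_pair.2 (List.isChain_cons_cons.1 hchain).1⟩).append_tail
        (h₂.isPathOf_iff.2 <| isPathOf_iff.2 ⟨by simp, hchain.tail⟩)
        (by rw [sample_getLast? _ (pow_ne_zero k two_ne_zero), sample_head?])
    have hA : PathEquiv dist R (S₁ ++ S₂.tail) (a :: S₂) := by
      simpa [← hS₂] using h₁.append_append hcat
    have hB : PathEquiv dist R (a :: S₂) (a :: b :: c :: l) := by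
      simpa using h₂.append_append (s := [a]) (t := []) (by simpa using hA.isPathOf_iff.1 hcat)
    rw [hsplit]
    exact .trans _ _ _ hA hB

end Metric

end Path

lemma exists_eq_forall_le_of_lt {f : ℝ → ℝ} {a b c t : ℝ} (hf : ContinuousOn f (Set.Icc a b))
    (ht : t ∈ Set.Icc a b) (hct : c < f t) (hb : f b ≤ c) :
    ∃ s ∈ Set.Icc a b, f s = c ∧ ∀ u ∈ Set.Icc s b, f u ≤ c := by
  set K := Set.Icc a b ∩ f ⁻¹' {c}
  have hK : IsClosed K := hf.preimage_isClosed_of_isClosed isClosed_Icc isClosed_singleton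
  have hbdd : BddAbove K := ⟨b, fun s hs => hs.1.2⟩
  have hcross : ∀ u ∈ Set.Icc a b, c < f u → ∃ s ∈ K, u ≤ s := by
    intro u hu hcu
    obtain ⟨s, hs, hfs⟩ :=
      intermediate_value_Icc' hu.2 (hf.mono (Set.Icc_subset_Icc_left hu.1)) ⟨hb, hcu.le⟩
    exact ⟨s, ⟨⟨hu.1.trans hs.1, hs.2⟩, hfs⟩, hs.1⟩
  obtain ⟨s, hsK, -⟩ := hcross t ht hct
  have hmax : sSup K ∈ K := hK.csSup_mem ⟨s, hsK⟩ hbdd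
  refine ⟨sSup K, hmax.1, hmax.2, fun u hu => ?_⟩
  by_contra! hcu
  obtain ⟨s', hs'K, hus'⟩ := hcross u ⟨hmax.1.1.trans hu.1, hu.2⟩ hcu
  have hu_eq : u = sSup K := le_antisymm (hus'.trans (le_csSup hbdd hs'K)) hu.1
  exact hcu.ne' (hu_eq ▸ hmax.2)

/- As `w` need not be monotone, only its value at `2 * r` is usable. If a path from `x` to `y`
leaves the ball of radius `2 * r` about `x`, reach its last point `v` on the sphere of radius
`2 * r` by a path given by `hw x v`, and follow the original path from `v` on. -/
lemma exists_path_forall_dist_le {X : Type*} [PseudoMetricSpace X] {w : ℝ → ℝ}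
    (hw : ∀ x y : X, ∃ γ : Path x y, ∀ u v : unitInterval, dist (γ u) (γ v) ≤ w (dist x y))
    {r : ℝ} {x y : X} (hxy : dist x y ≤ r) :
    ∃ γ : Path x y, ∀ u v, dist (γ u) (γ v) ≤ 2 * max (w (2 * r)) (4 * r) := by
  set C := max (w (2 * r)) (4 * r)
  have hr : 0 ≤ r := dist_nonneg.trans hxy
  have h4r : 4 * r ≤ C := le_max_right _ _
  suffices ∃ (γ : Path x y) (c : X), ∀ u, dist (γ u) c ≤ C by
    obtain ⟨γ, c, hγ⟩ := this
    exact ⟨γ, fun u v => (dist_triangle_right _ _ c).trans (by linarith [hγ u, hγ v])⟩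
  obtain ⟨γ₀, -⟩ := hw x y
  by_cases hsmall : ∀ u, dist (γ₀ u) x ≤ 2 * r
  · exact ⟨γ₀, x, fun u => (hsmall u).trans (by linarith)⟩
  simp only [not_forall, not_le] at hsmall
  obtain ⟨t, ht⟩ := hsmall
  obtain ⟨s₀, hs₀, hs₀x, hafter⟩ := exists_eq_forall_le_of_lt (f := fun s => dist (γ₀.extend s) x)
    (by fun_prop) t.2 (by simpa using ht) (by simpa [dist_comm] using hxy.trans (by linarith))
  set t₀ : unitInterval := ⟨s₀, hs₀⟩
  have hv : dist (γ₀ t₀) x = 2 * r := by rw [← γ₀.extend_extends' t₀]; exact hs₀x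
  obtain ⟨η, hη⟩ := hw x (γ₀ t₀)
  refine ⟨(η.trans (γ₀.subpath t₀ 1)).cast rfl γ₀.target.symm, γ₀ t₀, fun u => ?_⟩
  have hu : (η.trans (γ₀.subpath t₀ 1)) u ∈ Set.range η ∪ γ₀ '' Set.Icc t₀ 1 := by
    rw [← γ₀.range_subpath_of_le t₀ 1 le_top, ← Path.trans_range]
    exact ⟨u, rfl⟩
  rw [Path.cast_coe]
  rcases hu with ⟨u', hu'⟩ | ⟨t', ht', ht'u⟩
  · have := hη u' 1
    rw [η.target, dist_comm x, hv] at this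
    exact hu' ▸ this.trans (le_max_left _ _)
  · have ht'x : dist (γ₀ t') x ≤ 2 * r := by
      simpa only [γ₀.extend_extends'] using hafter t' ⟨ht'.1, t'.2.2⟩
    rw [← ht'u]
    linarith [dist_triangle_right (γ₀ t') (γ₀ t₀) x]

/-- a weakly geodesic metric space which is simply connected is coarsely simply
connected. -/
theorem coarselySimplyConnected_of_simplyConnected {X : Type*} [MetricSpace X]
    [SimplyConnectedSpace X] (w : ℝ → ℝ)
    (hw : ∀ x y : X, ∃ γ : Path x y,
      ∀ u v : unitInterval, dist (γ u) (γ v) ≤ w (dist x y)) :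
    CoarselySimplyConnected X := by
  refine ⟨⟨1, fun x y => ?_⟩, fun r => ?_⟩
  · obtain ⟨γ, -⟩ := hw x y
    obtain ⟨n, hn, hn0⟩ :=
      ((γ.eventually_isPathOf_sample one_pos).and (eventually_ne_atTop 0)).exists
    exact ⟨γ.sample n, hn, γ.sample_head? n, γ.sample_getLast? hn0⟩
  set r₁ := max r 1
  set R := 2 * max (w (2 * r₁)) (4 * r₁)
  have hrr₁ : r ≤ r₁ := le_max_left r 1
  have hr₁ : 1 ≤ r₁ := le_max_right r 1
  have hR : 8 * r₁ ≤ R := by have := le_max_right (w (2 * r₁)) (4 * r₁); linarith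
  have hshort (a b : X) : ∃ γ : Path a b, dist a b ≤ r₁ → ∀ s t, dist (γ s) (γ t) ≤ R :=
    if h : dist a b ≤ r₁ then (exists_path_forall_dist_le hw h).imp fun _ hγ _ => hγ
    else ⟨(hw a b).choose, fun h' => absurd h' h⟩
  choose J hJ using hshort
  refine ⟨R, by linarith, fun x₀ p ⟨hp, hhead, hlast⟩ => ?_⟩
  obtain ⟨_, l, rfl⟩ := List.exists_cons_of_ne_nil hp.1
  cases hhead
  rcases eq_or_ne l [] with rfl | hl
  · exact ⟨0, .refl _⟩
  have hloop : (x₀ :: l).getLast (List.cons_ne_nil x₀ l) = x₀ := by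
    simpa [List.getLast?_eq_some_getLast] using hlast
  let σ : Path x₀ x₀ := (Path.through J x₀ l).cast rfl hloop.symm
  have hr₁p : IsPathOf dist r₁ (x₀ :: l) := ⟨hp.1, hp.2.imp fun _ _ h => h.trans hrr₁⟩
  obtain ⟨k, h₁, h₂⟩ := ((Path.eventually_pathEquiv_sample_through hJ hl hr₁p).and
    ((tendsto_pow_atTop_atTop_of_one_lt one_lt_two).eventually
      ((SimplyConnectedSpace.paths_homotopic σ (.refl x₀)).some.eventually_pathEquiv_sample
        (R := R) (by linarith)))).exists
  rw [Path.sample_refl] at h₂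
  exact ⟨2 ^ k, .trans _ _ _ (.symm _ _ h₁) h₂⟩
end

section
/- Let G be a locally compact Hausdorff topological group, N a closed normal subgroup of G, and Q = G/N the quotient topological group. Suppose that G is compactly generated and that Q is compactly presented. Then N is compactly generated as a normal subgroup of G, i.e. N is the normal closure in G of some compact subset of N. -/
/-! Let `S` be a compact generating set of `G`, `T` a compact set boundedly presenting
`Q = G ⧸ N`, and `K = S ∪ L` where `L ⊆ G` is a compact set mapping onto `T`. By Baire's
theorem the image of `K` in `Q` lies in a ball of radius `M` for the word metric of `T`, so
every `y ∈ K` agrees modulo `N` with the lift `g` of a word of length `≤ M` in `T`, and then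
`g⁻¹ y` lies in the compact set `C = wordBall K m ∩ N`. Hence the subgroup `P` generated by the
lifts of `T` satisfies `P ⊔ ⟪C⟫ = G`. On the other hand `P ∩ N` is normally generated by the
lifted relators, which lie in `C` as well because the relators have bounded length. Together
these give `N ≤ ⟪C⟫`. -/

open scoped Pointwise

open Set

def wordBall {G : Type*} [Group G] (S : Set G) (n : ℕ) : Set G :=
  insert 1 (S ∪ S⁻¹) ^ n

section WordBall

variable {G : Type*} [Group G] (S : Set G)

theorem inv_wordBall (n : ℕ) : (wordBall S n)⁻¹ = wordBall S n := by
  rw [wordBall, ← inv_pow, inv_insert, inv_one, union_inv, inv_inv, union_comm]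

theorem wordBall_add (m n : ℕ) : wordBall S (m + n) = wordBall S m * wordBall S n :=
  pow_add _ m n

theorem wordBall_mono {m n : ℕ} (h : m ≤ n) : wordBall S m ⊆ wordBall S n :=
  pow_subset_pow_right (mem_insert 1 _) h

theorem wordBall_subset_wordBall {S' : Set G} (h : S ⊆ S') (n : ℕ) :
    wordBall S n ⊆ wordBall S' n :=
  pow_subset_pow_left (insert_subset_insert (union_subset_union h (inv_subset_inv.2 h)))

theorem subset_wordBall_one : S ⊆ wordBall S 1 := by
  rw [wordBall, pow_one]
  exact subset_union_left.trans (subset_insert 1 _)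

theorem wordBall_subset_closure (n : ℕ) : wordBall S n ⊆ Subgroup.closure S :=
  Subgroup.pow_subset <| insert_subset (Subgroup.one_mem _) <|
    union_subset Subgroup.subset_closure fun _ hx => by
      simpa using Subgroup.inv_mem _ (Subgroup.subset_closure hx)

theorem exists_mem_wordBall_of_mem_closure {x : G} (hx : x ∈ Subgroup.closure S) :
    ∃ n, x ∈ wordBall S n := by
  induction hx using Subgroup.closure_induction with
  | mem x hx => exact ⟨1, subset_wordBall_one S hx⟩
  | one => exact ⟨0, by simp [wordBall]⟩
  | mul x y _ _ hx hy =>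
    obtain ⟨⟨m, hm⟩, ⟨n, hn⟩⟩ := And.intro hx hy
    exact ⟨m + n, wordBall_add S m n ▸ mul_mem_mul hm hn⟩
  | inv x _ hx =>
    obtain ⟨n, hn⟩ := hx
    exact ⟨n, inv_wordBall S n ▸ inv_mem_inv.2 hn⟩

theorem image_wordBall {H : Type*} [Group H] (f : G →* H) (n : ℕ) :
    f '' wordBall S n = wordBall (f '' S) n := by
  rw [wordBall, wordBall, image_pow, image_insert_eq, image_union, image_inv, map_one]

theorem isCompact_wordBall [TopologicalSpace G] [IsTopologicalGroup G] {S : Set G}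
    (hS : IsCompact S) (n : ℕ) : IsCompact (wordBall S n) := by
  induction n with
  | zero => simp [wordBall]
  | succ n ih =>
    rw [wordBall_add S n 1]
    exact ih.mul (by simpa [wordBall] using (hS.union hS.inv).insert 1)

end WordBall

theorem FreeGroup.lift_mk_mem_wordBall {α G : Type*} [Group G] (f : α → G)
    (w : List (α × Bool)) :
    FreeGroup.lift f (FreeGroup.mk w) ∈ wordBall (range f) w.length := by
  rw [FreeGroup.lift_mk]
  induction w with
  | nil => simp [wordBall]
  | cons x w ih =>
    rw [List.map_cons, List.prod_cons, List.length_cons, add_comm, wordBall_add]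
    refine mul_mem_mul ?_ ih
    have hfx : f x.1 ∈ wordBall (range f) 1 := subset_wordBall_one _ (mem_range_self _)
    cases x.2
    · exact inv_wordBall (range f) 1 ▸ inv_mem_inv.2 hfx
    · exact hfx

theorem IsOpenMap.exists_isCompact_subset_image {X Y : Type*} [TopologicalSpace X]
    [TopologicalSpace Y] [WeaklyLocallyCompactSpace X] {f : X → Y} (hf : IsOpenMap f)
    {K : Set Y} (hK : IsCompact K) (hKf : K ⊆ range f) : ∃ L, IsCompact L ∧ K ⊆ f '' L := by
  choose U hU hxU using fun x : X => exists_compact_mem_nhds x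
  have hcover : K ⊆ ⋃ x, f '' interior (U x) := fun y hy => by
    obtain ⟨x, rfl⟩ := hKf hy
    exact mem_iUnion.2 ⟨x, mem_image_of_mem f (mem_interior_iff_mem_nhds.2 (hxU x))⟩
  obtain ⟨t, ht⟩ := hK.elim_finite_subcover _ (fun x => hf _ isOpen_interior) hcover
  refine ⟨⋃ x ∈ t, U x, t.finite_toSet.isCompact_biUnion fun x _ => hU x, ht.trans ?_⟩
  exact iUnion₂_subset fun x hx =>
    image_mono (interior_subset.trans (subset_biUnion_of_mem (u := U) hx))

theorem IsCompact.exists_subset_wordBall {Q : Type*} [Group Q] [TopologicalSpace Q]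
    [IsTopologicalGroup Q] [BaireSpace Q] [T2Space Q] {K T : Set Q} (hK : IsCompact K)
    (hT : IsCompact T) (hTgen : Subgroup.closure T = ⊤) : ∃ M, K ⊆ wordBall T M := by
  have hcover : ∀ q, ∃ m, q ∈ wordBall T m := fun q =>
    exists_mem_wordBall_of_mem_closure T (hTgen ▸ Subgroup.mem_top q)
  obtain ⟨j, u, hu⟩ := nonempty_interior_of_iUnion_of_closed
    (fun j => (isCompact_wordBall hT j).isClosed)
    (eq_univ_of_forall fun q => mem_iUnion.2 (hcover q))
  set V := interior (wordBall T j)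
  obtain ⟨m, hm⟩ : ∃ m, K ⊆ wordBall T m * V⁻¹ := by
    refine hK.elim_directed_cover _ (fun m => isOpen_interior.inv.mul_left) (fun q _ => ?_)
      (Monotone.directed_le fun a b hab => mul_subset_mul_right (wordBall_mono T hab))
    obtain ⟨m, hm⟩ := hcover (q * u)
    exact mem_iUnion.2 ⟨m, q * u, hm, u⁻¹, inv_mem_inv.2 hu, mul_inv_cancel_right q u⟩
  refine ⟨m + j, hm.trans ?_⟩
  rw [wordBall_add, ← inv_wordBall T j]
  exact mul_subset_mul_left (inv_subset_inv.2 interior_subset)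

theorem Subgroup.le_of_inf_le_of_sup_eq_top {G : Type*} [Group G] {P H N : Subgroup G}
    [H.Normal] (hHN : H ≤ N) (hinf : P ⊓ N ≤ H) (hsup : P ⊔ H = ⊤) : N ≤ H := by
  intro x hx
  obtain ⟨p, hp, h, hh, rfl⟩ := mem_sup_of_normal_right.1 (hsup ▸ mem_top x)
  have hpN : p ∈ N := by simpa using N.mul_mem hx (N.inv_mem (hHN hh))
  exact H.mul_mem (hinf ⟨hp, hpN⟩) hh

theorem BoundedlyPresentedBy.closure_eq_top {G : Type*} [Group G] {S : Set G}
    (h : BoundedlyPresentedBy G S) : Subgroup.closure S = ⊤ := by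
  obtain ⟨-, -, -, hsurj, -⟩ := h
  rw [← Subtype.range_coe (s := S), ← FreeGroup.range_lift_eq_closure]
  exact MonoidHom.range_eq_top.2 hsurj

theorem exists_normalClosure_wordBall_inter_eq {G : Type*} [Group G] {N : Subgroup G}
    [N.Normal] {T : Set (G ⧸ N)} (hT : BoundedlyPresentedBy (G ⧸ N) T) {K : Set G}
    (hKgen : Subgroup.closure K = ⊤) (hTK : T ⊆ QuotientGroup.mk '' K) {M : ℕ}
    (hKT : QuotientGroup.mk '' K ⊆ wordBall T M) :
    ∃ m, Subgroup.normalClosure (wordBall K m ∩ N) = N := by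
  obtain ⟨n, R, hR, -, hker⟩ := hT
  choose σ hσK hσ using fun t : T => hTK t.2
  set φ := FreeGroup.lift σ
  have hTσ : T = QuotientGroup.mk' N '' range σ := by
    rw [← range_comp]; ext; simp [hσ]
  have hcomap : N.comap φ = Subgroup.normalClosure R := by
    have hlift : (QuotientGroup.mk' N).comp φ = FreeGroup.lift fun t : T => (t : G ⧸ N) :=
      FreeGroup.ext_hom _ _ fun t => by simp [φ, hσ]
    rw [← hker, ← hlift, ← MonoidHom.comap_ker, QuotientGroup.ker_mk']
  have hσball (k : ℕ) : wordBall (range σ) k ⊆ wordBall K k :=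
    wordBall_subset_wordBall _ (range_subset_iff.2 hσK) k
  set C := wordBall K (max n (M + 1)) ∩ N
  have hinf : φ.range ⊓ N ≤ Subgroup.normalClosure C := by
    rw [← Subgroup.map_comap_eq, hcomap, Subgroup.map_le_iff_le_comap]
    refine Subgroup.normalClosure_le_normal fun r hr => Subgroup.subset_normalClosure ⟨?_, ?_⟩
    · obtain ⟨w, rfl, hw⟩ := hR r hr
      exact wordBall_mono K (le_max_left _ _)
        (hσball n (wordBall_mono _ hw (FreeGroup.lift_mk_mem_wordBall σ w)))
    · exact (hcomap ▸ Subgroup.subset_normalClosure hr : r ∈ N.comap φ)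
  have hsup : φ.range ⊔ Subgroup.normalClosure C = ⊤ := by
    rw [eq_top_iff, ← hKgen, Subgroup.closure_le]
    intro y hy
    obtain ⟨g, hg, hgy⟩ : ∃ g ∈ wordBall (range σ) M, (g : G ⧸ N) = y := by
      rw [← mem_image, ← QuotientGroup.coe_mk', image_wordBall, ← hTσ]
      exact hKT (mem_image_of_mem _ hy)
    have hgφ : g ∈ φ.range := by
      rw [FreeGroup.range_lift_eq_closure]
      exact wordBall_subset_closure _ M hg
    have hgyC : g⁻¹ * y ∈ C := by
      refine ⟨wordBall_mono K (le_max_right _ _) ?_, QuotientGroup.eq.1 hgy⟩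
      rw [wordBall_add, ← inv_wordBall K M]
      exact mul_mem_mul (inv_mem_inv.2 (hσball M hg)) (subset_wordBall_one K hy)
    simpa using Subgroup.mul_mem_sup hgφ (Subgroup.subset_normalClosure hgyC)
  have hCN : Subgroup.normalClosure C ≤ N := Subgroup.normalClosure_le_normal inter_subset_right
  exact ⟨max n (M + 1), hCN.antisymm (Subgroup.le_of_inf_le_of_sup_eq_top hCN hinf hsup)⟩

theorem normal_compactly_generated_of_quotient_compactlyPresented_general {G : Type*} [Group G]
    [TopologicalSpace G] [IsTopologicalGroup G] [LocallyCompactSpace G]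
    (N : Subgroup G) [N.Normal] (hclosed : IsClosed (N : Set G))
    (hG : ∃ S : Set G, IsCompact S ∧ Subgroup.closure S = ⊤)
    (hQ : CompactlyPresented (G ⧸ N)) :
    ∃ C : Set G, C ⊆ (N : Set G) ∧ IsCompact C ∧ Subgroup.normalClosure C = N := by
  obtain ⟨S, hS, hSgen⟩ := hG
  obtain ⟨T, hT, hTpres⟩ := hQ
  obtain ⟨L, hL, hTL⟩ := QuotientGroup.isOpenMap_coe.exists_isCompact_subset_image hT
    (by simp [QuotientGroup.mk_surjective.range_eq])
  -- makes `G ⧸ N` Hausdorff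
  have : IsClosed (N : Set G) := hclosed
  obtain ⟨M, hM⟩ := ((hS.union hL).image continuous_coinduced_rng).exists_subset_wordBall hT
    hTpres.closure_eq_top
  obtain ⟨m, hm⟩ := exists_normalClosure_wordBall_inter_eq hTpres
    (top_unique (hSgen ▸ Subgroup.closure_mono subset_union_left))
    (hTL.trans (image_mono subset_union_right)) hM
  exact ⟨_, inter_subset_right, (isCompact_wordBall (hS.union hL) m).inter_right hclosed, hm⟩

/-- if `G` is a compactly generated locally compact group and the quotient
`Q = G / N` by a closed normal subgroup `N` is compactly presented, then `N` is compactly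
generated as a normal subgroup of `G`, i.e. it is the normal closure of a compact subset of
itself. -/
theorem normal_compactly_generated_of_quotient_compactlyPresented {G : Type*} [Group G]
    [TopologicalSpace G] [IsTopologicalGroup G] [T2Space G] [LocallyCompactSpace G]
    (N : Subgroup G) [N.Normal] (hclosed : IsClosed (N : Set G))
    (hG : ∃ S : Set G, IsCompact S ∧ Subgroup.closure S = ⊤)
    (hQ : CompactlyPresented (G ⧸ N)) :
    ∃ C : Set G, C ⊆ (N : Set G) ∧ IsCompact C ∧ Subgroup.normalClosure C = N :=
  normal_compactly_generated_of_quotient_compactlyPresented_general N hclosed hG hQ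
end
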